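/- For every z ≥ 1 and every partition p, one has (d_com^{(z)})^3(p) = d_com^{(z)}(p); that is, d_com^{(z)} restricted to its image is an involution. -/

import Mathlib

namespace PartStmt

/-- Sorted (nonincreasing) list of parts of a partition, represented as a multiset. -/
def parts (m : Multiset ℕ) : List ℕ := (m.sort (· ≤ ·)).reverse

/-- The `i`-th part (0-indexed), with `0` beyond the length. -/
def part (m : Multiset ℕ) (i : ℕ) : ℕ := (parts m).getD i 0

/-- Partial sum of the `k` largest parts. -/
def psum (m : Multiset ℕ) (k : ℕ) : ℕ := ∑ i ∈ Finset.range k, part m i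

/-- Dominance order: every partial sum of `l` is at most that of `m`. -/
def Dom (l m : Multiset ℕ) : Prop := ∀ k, psum l k ≤ psum m k

/-- Strict dominance. -/
def StrictDom (l m : Multiset ℕ) : Prop := Dom l m ∧ l ≠ m

/-- Componentwise sum of two partitions (sorted part sequences added, zero padding). -/
def psAdd (l m : Multiset ℕ) : Multiset ℕ :=
  ((Multiset.range (Multiset.card l + Multiset.card m)).map
    (fun i => part l i + part m i)).filter (0 < ·)

/-- The transpose (conjugate) partition: the `j`-th column length `#{x ∈ m : x ≥ j+1}`. -/
def transpose (m : Multiset ℕ) : Multiset ℕ :=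
  ((Multiset.range m.sum).map
    (fun j => Multiset.card (m.filter (fun x => j + 1 ≤ x)))).filter (0 < ·)

/-- The partition `s(m; z) = (z^a, b)` where `m = a z + b`, `0 ≤ b < z`. -/
def sPart (m z : ℕ) : Multiset ℕ :=
  Multiset.replicate (m / z) z + (if m % z = 0 then 0 else {m % z})

/-- `d_com^{(z)}(p) = Σ_i s(p_i; z)` (componentwise partition sum). -/
def dcom (z : ℕ) (p : Multiset ℕ) : Multiset ℕ :=
  (parts p).foldr (fun x acc => psAdd (sPart x z) acc) 0

/-- A multiset is a partition when all its parts are positive. -/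
def IsPartition (m : Multiset ℕ) : Prop := ∀ x ∈ m, 0 < x



/-! ### Auxiliary machinery -/

lemma parts_coe (L : List ℕ) (h : L.Pairwise (· ≥ ·)) : parts (↑L) = L := by
  have h1 : (Multiset.sort (↑L : Multiset ℕ) (· ≤ ·)) = L.reverse := by
    have hperm : (Multiset.sort (↑L : Multiset ℕ) (· ≤ ·)).Perm L.reverse := by
      rw [← Multiset.coe_eq_coe, Multiset.sort_eq, ← Multiset.coe_reverse]
    refine List.Perm.eq_of_pairwise' (Multiset.pairwise_sort _ _) ?_ hperm
    rw [List.pairwise_reverse]; exact h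
  simp [parts, h1]

lemma coe_parts (m : Multiset ℕ) : (↑(parts m) : Multiset ℕ) = m := by
  simp [parts, Multiset.coe_reverse]

lemma length_parts (m : Multiset ℕ) : (parts m).length = Multiset.card m := by
  simp [parts]

lemma sorted_parts (m : Multiset ℕ) : (parts m).Pairwise (· ≥ ·) := by
  rw [parts, List.pairwise_reverse]
  exact Multiset.pairwise_sort m (· ≤ ·)

lemma part_out {m : Multiset ℕ} {i : ℕ} (h : Multiset.card m ≤ i) : part m i = 0 := by
  apply List.getD_eq_default
  rwa [length_parts]

lemma mem_parts {m : Multiset ℕ} {x : ℕ} (h : x ∈ parts m) : x ∈ m := by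
  rw [← coe_parts m]; exact_mod_cast h

lemma part_pos {m : Multiset ℕ} (hm : IsPartition m) {i : ℕ} (h : i < Multiset.card m) :
    0 < part m i := by
  have hl : i < (parts m).length := by rwa [length_parts]
  rw [part, List.getD_eq_getElem _ _ hl]
  exact hm _ (mem_parts (List.getElem_mem hl))

lemma part_antitone (m : Multiset ℕ) : Antitone (part m) := by
  intro i j hij
  rcases eq_or_lt_of_le hij with rfl | hij
  · exact le_refl _
  by_cases hj : j < (parts m).length
  · have hi : i < (parts m).length := lt_trans hij hj
    rw [part, part, List.getD_eq_getElem _ _ hi, List.getD_eq_getElem _ _ hj]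
    have := List.pairwise_iff_getElem.1 (sorted_parts m) i j hi hj hij
    exact this
  · rw [part, List.getD_eq_default _ _ (le_of_not_gt hj)]
    exact Nat.zero_le _

lemma part_zero_multiset (i : ℕ) : part 0 i = 0 := by
  simp [part, parts]

/-- The canonical multiset attached to an antitone eventually-zero function. -/
def canon (g : ℕ → ℕ) (n : ℕ) : Multiset ℕ :=
  ((Multiset.range n).map g).filter (0 < ·)

lemma canon_coe (g : ℕ → ℕ) (n : ℕ) :
    canon g n = (↑(((List.range n).map g).filter (fun x => 0 < x)) : Multiset ℕ) := by
  simp [canon, Multiset.range]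

lemma isPartition_canon (g : ℕ → ℕ) (n : ℕ) : IsPartition (canon g n) := by
  intro x hx
  exact (Multiset.mem_filter.1 hx).2

lemma part_canon (g : ℕ → ℕ) (hg : Antitone g) (n : ℕ) (hn : g n = 0) (i : ℕ) :
    part (canon g n) i = g i := by
  classical
  have hex : ∃ k, g k = 0 := ⟨n, hn⟩
  set k := Nat.find hex with hk
  have hkn : k ≤ n := Nat.find_min' hex hn
  have hpos : ∀ j < k, 0 < g j := fun j hj => Nat.pos_of_ne_zero (Nat.find_min hex hj)
  have hzero : ∀ j, k ≤ j → g j = 0 := fun j hj =>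
    Nat.le_zero.1 ((Nat.find_spec hex) ▸ hg hj)
  have hfil : ((List.range n).map g).filter (fun x => 0 < x) = (List.range k).map g := by
    have : n = k + (n - k) := by omega
    rw [this, List.range_add, List.map_append, List.filter_append]
    have h1 : ((List.range k).map g).filter (fun x => 0 < x) = (List.range k).map g := by
      apply List.filter_eq_self.2
      intro a ha
      obtain ⟨j, hj, rfl⟩ := List.mem_map.1 ha
      simpa using hpos j (List.mem_range.1 hj)
    have h2 : (((List.range (n-k)).map (k + ·)).map g).filter (fun x => 0 < x) = [] := by
      apply List.filter_eq_nil_iff.2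
      intro a ha
      obtain ⟨j, hj, rfl⟩ := List.mem_map.1 ha
      obtain ⟨j', hj', rfl⟩ := List.mem_map.1 hj
      simp [hzero _ (Nat.le_add_right k j')]
    rw [h1, h2, List.append_nil]
  have hsorted : ((List.range k).map g).Pairwise (· ≥ ·) := by
    rw [List.pairwise_map]
    exact (List.pairwise_lt_range (n := k)).imp (fun h => hg (le_of_lt h))
  rw [part, canon_coe, hfil, parts_coe _ hsorted]
  by_cases hik : i < k
  · rw [List.getD_eq_getElem _ _ (by simpa using hik)]
    simp
  · rw [List.getD_eq_default _ _ (by simpa using le_of_not_gt hik)]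
    exact (hzero i (le_of_not_gt hik)).symm

lemma psAdd_eq_canon (l m : Multiset ℕ) :
    psAdd l m = canon (fun i => part l i + part m i) (Multiset.card l + Multiset.card m) := rfl

lemma part_psAdd (l m : Multiset ℕ) (i : ℕ) :
    part (psAdd l m) i = part l i + part m i := by
  rw [psAdd_eq_canon]
  refine part_canon _ ?_ _ ?_ i
  · exact fun a b hab => Nat.add_le_add (part_antitone l hab) (part_antitone m hab)
  · rw [part_out (Nat.le_add_right _ _), part_out (Nat.le_add_left _ _)]

lemma isPartition_psAdd (l m : Multiset ℕ) : IsPartition (psAdd l m) := by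
  rw [psAdd_eq_canon]; exact isPartition_canon _ _

lemma min_sub_identity (z x i : ℕ) :
    min x ((i+1)*z) = min x (i*z) + min z (x - i*z) := by
  have h : (i+1)*z = i*z + z := by ring
  rw [h]; omega

lemma part_sPart {z : ℕ} (hz : 1 ≤ z) (x i : ℕ) :
    part (sPart x z) i = min z (x - i*z) := by
  set a := x / z with ha
  set b := x % z with hb
  have hab : a * z + b = x := by rw [ha, hb, Nat.mul_comm]; exact Nat.div_add_mod x z
  have hblt : b < z := Nat.mod_lt _ hz
  have hcoe : sPart x z =
      (↑(List.replicate a z ++ if b = 0 then [] else [b]) : Multiset ℕ) := by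
    by_cases h : b = 0 <;>
      simp [sPart, h, ← hb, ← ha, ← Multiset.coe_replicate, ← Multiset.coe_singleton,
        ← Multiset.coe_add]
  have hsorted : (List.replicate a z ++ if b = 0 then [] else [b]).Pairwise (· ≥ ·) := by
    rw [List.pairwise_append]
    refine ⟨List.pairwise_replicate.2 (Or.inr le_rfl), ?_, ?_⟩
    · split <;> simp
    · intro u hu v hv
      rw [List.eq_of_mem_replicate hu]
      split at hv
      · simp at hv
      · simp at hv
        omega
  rw [part, hcoe, parts_coe _ hsorted]
  rcases Nat.lt_trichotomy i a with hia | hia | hia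
  · have hiz : i * z + z ≤ a * z := by
      calc i * z + z = (i+1) * z := by ring
      _ ≤ a * z := Nat.mul_le_mul_right z hia
    have hlen : i < (List.replicate a z).length := by simpa using hia
    rw [List.getD_eq_getElem _ _ (by simp [List.length_append]; omega : i < _)]
    rw [List.getElem_append_left hlen, List.getElem_replicate]
    omega
  · subst hia
    have hsub : x - a * z = b := by omega
    rw [hsub]
    by_cases h : b = 0
    · rw [List.getD_eq_default _ _ (by simp [h])]
      omega
    · rw [List.getD_eq_getElem _ _ (by simp [h] : a < _)]
      rw [List.getElem_append_right (by simp)]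
      simp [h]
      omega
  · have hiz : a * z + z ≤ i * z := by
      calc a * z + z = (a+1) * z := by ring
      _ ≤ i * z := Nat.mul_le_mul_right z hia
    rw [List.getD_eq_default _ _ (by split <;> simp <;> omega)]
    omega

/-! ### The functions `Fv` and `Gv` -/

def Fv (z : ℕ) (m : Multiset ℕ) (i : ℕ) : ℕ := (m.map (fun x => min z (x - i*z))).sum
def Gv (m : Multiset ℕ) (t : ℕ) : ℕ := (m.map (fun x => min x t)).sum

lemma foldr_spec {z : ℕ} (hz : 1 ≤ z) (L : List ℕ) :
    IsPartition (L.foldr (fun x acc => psAdd (sPart x z) acc) 0) ∧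
    ∀ i, part (L.foldr (fun x acc => psAdd (sPart x z) acc) 0) i
      = (L.map (fun x => min z (x - i*z))).sum := by
  induction L with
  | nil =>
    refine ⟨fun x hx => by simp at hx, fun i => by simp [part_zero_multiset]⟩
  | cons x L ih =>
    refine ⟨isPartition_psAdd _ _, fun i => ?_⟩
    rw [List.foldr_cons, part_psAdd, part_sPart hz, ih.2 i, List.map_cons, List.sum_cons]

lemma isPartition_dcom {z : ℕ} (hz : 1 ≤ z) (m : Multiset ℕ) : IsPartition (dcom z m) :=
  (foldr_spec hz (parts m)).1

lemma part_dcom {z : ℕ} (hz : 1 ≤ z) (m : Multiset ℕ) (i : ℕ) :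
    part (dcom z m) i = Fv z m i := by
  rw [dcom, (foldr_spec hz (parts m)).2 i]
  have h : (Multiset.map (fun x => min z (x - i*z)) ↑(parts m)).sum
      = (Multiset.map (fun x => min z (x - i*z)) m).sum := by rw [coe_parts]
  rw [Fv, ← h, Multiset.map_coe, Multiset.sum_coe]

lemma list_sum_range (L : List ℕ) (f : ℕ → ℕ) :
    (L.map f).sum = ∑ i ∈ Finset.range L.length, f (L.getD i 0) := by
  induction L with
  | nil => simp
  | cons a L ih =>
    rw [List.map_cons, List.sum_cons, ih, List.length_cons, Finset.sum_range_succ']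
    simp [Nat.add_comm]

lemma sum_map_eq_sum_part (m : Multiset ℕ) (f : ℕ → ℕ) (hf : f 0 = 0) {M : ℕ}
    (hM : Multiset.card m ≤ M) :
    (m.map f).sum = ∑ i ∈ Finset.range M, f (part m i) := by
  conv_lhs => rw [← coe_parts m]
  rw [Multiset.map_coe, Multiset.sum_coe, list_sum_range, length_parts]
  rw [Finset.range_eq_Ico, Finset.range_eq_Ico,
    ← Finset.sum_Ico_consecutive _ (Nat.zero_le (Multiset.card m)) hM]
  have h : ∑ i ∈ Finset.Ico (Multiset.card m) M, f (part m i) = 0 := by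
    apply Finset.sum_eq_zero
    intro i hi
    rw [part_out (Finset.mem_Ico.1 hi).1, hf]
  rw [h, Nat.add_zero]
  rfl

lemma card_le_of_part_eq_zero {m : Multiset ℕ} (hm : IsPartition m) {M : ℕ}
    (h : part m M = 0) : Multiset.card m ≤ M := by
  by_contra h'
  push_neg at h'
  have := part_pos hm h'
  omega

lemma part_ext {m n : Multiset ℕ} (hm : IsPartition m) (hn : IsPartition n)
    (h : ∀ i, part m i = part n i) : m = n := by
  have key : ∀ {a b : Multiset ℕ}, IsPartition b → (∀ i, part a i = part b i) →
      Multiset.card b ≤ Multiset.card a := by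
    intro a b hb hab
    apply card_le_of_part_eq_zero hb
    rw [← hab, part_out le_rfl]
  have hcard : (parts m).length = (parts n).length := by
    rw [length_parts, length_parts]
    exact le_antisymm (key hm (fun i => (h i).symm)) (key hn h)
  rw [← coe_parts m, ← coe_parts n]
  congr 1
  apply List.ext_getElem hcard
  intro i h1 h2
  have hi := h i
  rwa [part, part, List.getD_eq_getElem _ _ h1, List.getD_eq_getElem _ _ h2] at hi

lemma Gv_zero (m : Multiset ℕ) : Gv m 0 = 0 := by simp [Gv]

lemma Gv_step (z : ℕ) (m : Multiset ℕ) (i : ℕ) :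
    Gv m ((i+1)*z) = Gv m (i*z) + Fv z m i := by
  rw [Gv, Gv, Fv, ← Multiset.sum_map_add]
  congr 1
  apply Multiset.map_congr rfl
  intro x _
  exact min_sub_identity z x i

lemma Fv_eq_zero {z : ℕ} {m : Multiset ℕ} {i : ℕ} (h : ∀ x ∈ m, x ≤ i * z) :
    Fv z m i = 0 := by
  rw [Fv]
  apply Multiset.sum_eq_zero
  intro y hy
  obtain ⟨x, hx, rfl⟩ := Multiset.mem_map.1 hy
  simp [Nat.sub_eq_zero_of_le (h x hx)]

lemma Gv_sat {m : Multiset ℕ} {t : ℕ} (h : ∀ x ∈ m, x ≤ t) : Gv m t = m.sum := by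
  rw [Gv]
  rw [Multiset.map_congr rfl (fun x hx => min_eq_left (h x hx))]; simp

lemma Fv_le_sum (z : ℕ) (m : Multiset ℕ) (i : ℕ) : Fv z m i ≤ m.sum := by
  conv_rhs => rw [← Multiset.map_id m]
  apply Multiset.sum_map_le_sum_map
  intro x _
  calc min z (x - i*z) ≤ x - i*z := min_le_right _ _
  _ ≤ x := Nat.sub_le _ _

lemma Fv_anti (z : ℕ) (m : Multiset ℕ) {i i' : ℕ} (h : i ≤ i') :
    Fv z m i' ≤ Fv z m i := by
  apply Multiset.sum_map_le_sum_map
  intro x _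
  exact min_le_min le_rfl (Nat.sub_le_sub_left (Nat.mul_le_mul_right z h) x)

lemma tele_min (z a : ℕ) (n : ℕ) :
    ∑ i ∈ Finset.range n, min z (a - i*z) = min a (n*z) := by
  induction n with
  | zero => simp
  | succ n ih => rw [Finset.sum_range_succ, ih, ← min_sub_identity]

lemma Gv_eq_sum_Fv (z : ℕ) (m : Multiset ℕ) (j : ℕ) :
    Gv m (j*z) = ∑ s ∈ Finset.range j, Fv z m s := by
  induction j with
  | zero => simp [Gv_zero]
  | succ n ih => rw [Finset.sum_range_succ, ← ih, ← Gv_step]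

lemma card_le_sum {m : Multiset ℕ} (hm : ∀ x ∈ m, 0 < x) : Multiset.card m ≤ m.sum := by
  conv_rhs => rw [← Multiset.map_id m]
  have h : Multiset.card m = (m.map (fun _ => 1)).sum := by
    simp [Multiset.map_const']
  rw [h]
  exact Multiset.sum_map_le_sum_map _ _ (fun x hx => hm x hx)


/-- `(d_com^{(z)})³ = d_com^{(z)}`. -/
theorem stmt8 (z : ℕ) (hz : 1 ≤ z) (p : Multiset ℕ) (hp : IsPartition p) :
    dcom z (dcom z (dcom z p)) = dcom z p := by
  set q := dcom z p with hq
  set r := dcom z q with hr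
  have hqpart : IsPartition q := isPartition_dcom hz p
  have hrpart : IsPartition r := isPartition_dcom hz q
  set S := p.sum with hS
  have hxp : ∀ x ∈ p, x ≤ S := fun x hx =>
    Multiset.single_le_sum (fun y _ => Nat.zero_le y) x hx
  have hmulz : ∀ s t : ℕ, s ≤ t → s ≤ t * z := fun s t h =>
    le_trans h (Nat.le_mul_of_pos_right t hz)
  have hdq : ∀ i, part q i = Fv z p i := part_dcom hz p
  have hdr : ∀ i, part r i = Fv z q i := part_dcom hz q
  have hcardq : Multiset.card q ≤ S := by
    apply card_le_of_part_eq_zero hqpart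
    rw [hdq]
    exact Fv_eq_zero (fun x hx => hmulz x S (hxp x hx))
  have hGpS : Gv p (S*z) = S := Gv_sat (fun x hx => hmulz x S (hxp x hx))
  have hsumq : q.sum = S := by
    have h1 : q.sum = ∑ i ∈ Finset.range S, part q i := by
      have h0 := sum_map_eq_sum_part q id rfl hcardq
      simpa using h0
    rw [h1, Finset.sum_congr rfl (fun i _ => hdq i), ← Gv_eq_sum_Fv, hGpS]
  have hxq : ∀ x ∈ q, x ≤ S := fun x hx =>
    hsumq ▸ Multiset.single_le_sum (fun y _ => Nat.zero_le y) x hx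
  have hcardr : Multiset.card r ≤ S := by
    apply card_le_of_part_eq_zero hrpart
    rw [hdr]
    exact Fv_eq_zero (fun x hx => hmulz x S (hxq x hx))
  have hGqS : Gv q (S*z) = S := by
    rw [Gv_sat (fun x hx => hmulz x S (hxq x hx)), hsumq]
  have hsumr : r.sum = S := by
    have h1 : r.sum = ∑ i ∈ Finset.range S, part r i := by
      have h0 := sum_map_eq_sum_part r id rfl hcardr
      simpa using h0
    rw [h1, Finset.sum_congr rfl (fun i _ => hdr i), ← Gv_eq_sum_Fv, hGqS]
  have hxr : ∀ x ∈ r, x ≤ S := fun x hx =>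
    hsumr ▸ Multiset.single_le_sum (fun y _ => Nat.zero_le y) x hx
  have heform : ∀ i, Fv z q i = ∑ s ∈ Finset.range S, min z (Fv z p s - i*z) := by
    intro i
    rw [Fv, sum_map_eq_sum_part q (fun x => min z (x - i*z)) (by simp) hcardq]
    exact Finset.sum_congr rfl (fun s _ => by rw [hdq s])
  -- the key claim
  have main : ∀ j, Gv r (j*z) = Gv p (j*z) := by
    intro j
    by_cases hjS : j ≤ S
    swap
    · push_neg at hjS
      have h1 : Gv p (j*z) = S := Gv_sat (fun x hx => hmulz x j (le_trans (hxp x hx) hjS.le))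
      have h2 : Gv r (j*z) = S := by
        rw [Gv_sat (fun x hx => hmulz x j (le_trans (hxr x hx) hjS.le)), hsumr]
      rw [h1, h2]
    rcases Nat.eq_zero_or_pos j with rfl | hj1
    · simp [Gv_zero]
    have hwq : Gv r (j*z) = ∑ i ∈ Finset.range S, min (Fv z q i) (j*z) := by
      rw [Gv, sum_map_eq_sum_part r (fun x => min x (j*z)) (by simp) hcardr]
      exact Finset.sum_congr rfl (fun i _ => by rw [hdr i])
    have hupj : Gv p (j*z) = ∑ s ∈ Finset.range j, Fv z p s := Gv_eq_sum_Fv z p j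
    have hlow : Gv p (j*z) ≤ Gv r (j*z) := by
      rw [hwq, hupj]
      have hstep : ∀ i ∈ Finset.range S,
          ∑ s ∈ Finset.range j, min z (Fv z p s - i*z) ≤ min (Fv z q i) (j*z) := by
        intro i _
        apply le_min
        · rw [heform i]
          exact Finset.sum_le_sum_of_subset (Finset.range_subset_range.2 hjS)
        · calc ∑ s ∈ Finset.range j, min z (Fv z p s - i*z)
              ≤ ∑ _s ∈ Finset.range j, z := Finset.sum_le_sum (fun s _ => min_le_left _ _)
          _ = j*z := by simp [Finset.sum_const, smul_eq_mul]
      calc ∑ s ∈ Finset.range j, Fv z p s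
          = ∑ s ∈ Finset.range j, min (Fv z p s) (S*z) :=
            Finset.sum_congr rfl (fun s _ =>
              (min_eq_left (hmulz _ S (Fv_le_sum z p s))).symm)
        _ = ∑ s ∈ Finset.range j, ∑ i ∈ Finset.range S, min z (Fv z p s - i*z) :=
            Finset.sum_congr rfl (fun s _ => (tele_min z _ S).symm)
        _ = ∑ i ∈ Finset.range S, ∑ s ∈ Finset.range j, min z (Fv z p s - i*z) :=
            Finset.sum_comm
        _ ≤ ∑ i ∈ Finset.range S, min (Fv z q i) (j*z) := Finset.sum_le_sum hstep
    have hupp : Gv r (j*z) ≤ Gv p (j*z) := by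
      obtain ⟨j', rfl⟩ : ∃ j', j = j' + 1 := ⟨j - 1, by omega⟩
      set k := Multiset.card (p.filter (fun x => (j'+1)*z ≤ x)) with hk
      have hkS : k ≤ S := le_trans
        (Multiset.card_le_card (Multiset.filter_le _ p)) (card_le_sum hp)
      have hzz : (j'+1)*z = j'*z + z := by ring
      have hdjk : Fv z p (j'+1) ≤ k*z := by
        rw [Fv]
        conv_lhs => rw [← Multiset.filter_add_not (fun x => (j'+1)*z ≤ x) p]
        rw [Multiset.map_add, Multiset.sum_add]
        have h1 : ((p.filter (fun x => (j'+1)*z ≤ x)).map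
            (fun x => min z (x - (j'+1)*z))).sum ≤ k*z := by
          calc ((p.filter (fun x => (j'+1)*z ≤ x)).map
                (fun x => min z (x - (j'+1)*z))).sum
              ≤ ((p.filter (fun x => (j'+1)*z ≤ x)).map (fun _ => z)).sum :=
                Multiset.sum_map_le_sum_map _ _ (fun x _ => min_le_left _ _)
            _ = k*z := by simp [Multiset.map_const', smul_eq_mul, hk]
        have h2 : ((p.filter (fun x => ¬ (j'+1)*z ≤ x)).map
            (fun x => min z (x - (j'+1)*z))).sum = 0 := by
          apply Multiset.sum_eq_zero
          intro y hy
          obtain ⟨x, hx, rfl⟩ := Multiset.mem_map.1 hy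
          have hxlt := (Multiset.mem_filter.1 hx).2
          simp only [not_le] at hxlt
          simp [Nat.sub_eq_zero_of_le hxlt.le]
        omega
      have hdj1 : k*z ≤ Fv z p j' := by
        rw [Fv]
        conv_rhs => rw [← Multiset.filter_add_not (fun x => (j'+1)*z ≤ x) p]
        rw [Multiset.map_add, Multiset.sum_add]
        have h1 : k*z ≤ ((p.filter (fun x => (j'+1)*z ≤ x)).map
            (fun x => min z (x - j'*z))).sum := by
          have h0 : ((p.filter (fun x => (j'+1)*z ≤ x)).map (fun _ => z)).sum
              ≤ ((p.filter (fun x => (j'+1)*z ≤ x)).map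
                (fun x => min z (x - j'*z))).sum := by
            apply Multiset.sum_map_le_sum_map
            intro x hx
            have hxge := (Multiset.mem_filter.1 hx).2
            have : z ≤ x - j'*z := by omega
            omega
          have h0' : ((p.filter (fun x => (j'+1)*z ≤ x)).map (fun _ => z)).sum = k*z := by
            simp [Multiset.map_const', smul_eq_mul, hk]
          omega
        omega
      have hvk1 : Gv q (k*z) = ∑ i ∈ Finset.range k, Fv z q i := Gv_eq_sum_Fv z q k
      have hvk2 : Gv q (k*z) = (j'+1)*(k*z) + ∑ s ∈ Finset.Ico (j'+1) S, Fv z p s := by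
        rw [Gv, sum_map_eq_sum_part q (fun x => min x (k*z)) (by simp) hcardq]
        rw [Finset.range_eq_Ico, ← Finset.sum_Ico_consecutive _ (Nat.zero_le (j'+1)) hjS]
        congr 1
        · rw [← Finset.range_eq_Ico]
          have hconst : ∀ s ∈ Finset.range (j'+1), min (part q s) (k*z) = k*z := by
            intro s hs
            have hs' : s ≤ j' := by simpa [Nat.lt_succ_iff] using hs
            have hmono : Fv z p j' ≤ Fv z p s := Fv_anti z p hs'
            rw [hdq s]
            exact min_eq_right (by omega)
          rw [Finset.sum_congr rfl hconst]
          simp [Finset.sum_const, smul_eq_mul]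
        · apply Finset.sum_congr rfl
          intro s hs
          have hs' : j' + 1 ≤ s := (Finset.mem_Ico.1 hs).1
          have hmono : Fv z p s ≤ Fv z p (j'+1) := Fv_anti z p hs'
          rw [hdq s]
          exact min_eq_left (by omega)
      have hsplitw : Gv r ((j'+1)*z) ≤ k*((j'+1)*z) + ∑ i ∈ Finset.Ico k S, Fv z q i := by
        rw [hwq, Finset.range_eq_Ico, ← Finset.sum_Ico_consecutive _ (Nat.zero_le k) hkS]
        apply Nat.add_le_add
        · rw [← Finset.range_eq_Ico]
          calc ∑ i ∈ Finset.range k, min (Fv z q i) ((j'+1)*z)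
              ≤ ∑ _i ∈ Finset.range k, (j'+1)*z :=
                Finset.sum_le_sum (fun i _ => min_le_right _ _)
            _ = k*((j'+1)*z) := by simp [Finset.sum_const, smul_eq_mul]
        · exact Finset.sum_le_sum (fun i _ => min_le_left _ _)
      have htel_e : ∑ i ∈ Finset.range k, Fv z q i + ∑ i ∈ Finset.Ico k S, Fv z q i = S := by
        rw [Finset.range_eq_Ico, Finset.sum_Ico_consecutive _ (Nat.zero_le k) hkS,
          ← Finset.range_eq_Ico, ← Gv_eq_sum_Fv, hGqS]
      have htel_d : ∑ s ∈ Finset.range (j'+1), Fv z p s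
          + ∑ s ∈ Finset.Ico (j'+1) S, Fv z p s = S := by
        rw [Finset.range_eq_Ico, Finset.sum_Ico_consecutive _ (Nat.zero_le (j'+1)) hjS,
          ← Finset.range_eq_Ico, ← Gv_eq_sum_Fv, hGpS]
      rw [hupj]
      have hcomm : k*((j'+1)*z) = (j'+1)*(k*z) := by ring
      omega
    omega
  apply part_ext (isPartition_dcom hz r) hqpart
  intro i
  rw [part_dcom hz r i, hdq i]
  have h1 := Gv_step z r i
  have h2 := Gv_step z p i
  have h3 := main i
  have h4 := main (i+1)
  omega


end PartStmt
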